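/- Let S ⊆ [m] × [n] be a finite set and let j ∈ [n] with rows(j) ≠ ∅. Then E^j := rows(j) × { q ∈ [n] : rows(j) ⊆ rows(q) } is a maximal clique of S, i.e. E^j ∈ Max(S); moreover, for every maximal clique D ∈ Max(S) with j ∈ cols(D), one has rows(D) ⊆ rows(E^j). -/
import Mathlib


/-- A clique in `S ⊆ [m] × [n]` is a nonempty subset of `S` of the form `R × C`. -/
def IsCliqueIn {m n : ℕ} (S D : Finset (Fin m × Fin n)) : Prop :=
  D.Nonempty ∧ D ⊆ S ∧ ∃ (R : Finset (Fin m)) (C : Finset (Fin n)), D = R ×ˢ C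

/-- A maximal clique of `S`, i.e. an element of `Max(S)`. -/
def IsMaxCliqueIn {m n : ℕ} (S D : Finset (Fin m × Fin n)) : Prop :=
  IsCliqueIn S D ∧ ∀ E, IsCliqueIn S E → D ⊆ E → D = E

/-- The row set of a clique. -/
def rowsOf {m n : ℕ} (D : Finset (Fin m × Fin n)) : Finset (Fin m) := D.image Prod.fst

/-- The column set of a clique. -/
def colsOf {m n : ℕ} (D : Finset (Fin m × Fin n)) : Finset (Fin n) := D.image Prod.snd

/-- `rows(j) = { i : (i,j) ∈ S }`. -/
def rowsSet {m n : ℕ} (S : Finset (Fin m × Fin n)) (j : Fin n) : Finset (Fin m) :=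
  (S.filter fun p => p.2 = j).image Prod.fst

lemma mem_rowsSet {m n : ℕ} {S : Finset (Fin m × Fin n)} {j : Fin n} {i : Fin m} :
    i ∈ rowsSet S j ↔ (i, j) ∈ S := by
  simp only [rowsSet, Finset.mem_image, Finset.mem_filter]
  constructor
  · rintro ⟨⟨a, b⟩, ⟨hS, rfl⟩, rfl⟩
    exact hS
  · intro h
    exact ⟨(i, j), ⟨h, rfl⟩, rfl⟩

/-- For `j ∈ [n]` with `rows(j) ≠ ∅`, the set
`E^j = rows(j) × { q : rows(j) ⊆ rows(q) }` is a maximal clique of `S`, and every maximal clique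
`D` with `j ∈ cols(D)` satisfies `rows(D) ⊆ rows(E^j)`. -/
theorem stmt6 {m n : ℕ} (S : Finset (Fin m × Fin n)) (j : Fin n)
    (hj : (rowsSet S j).Nonempty) :
    IsMaxCliqueIn S
      (rowsSet S j ×ˢ (Finset.univ.filter fun q : Fin n => rowsSet S j ⊆ rowsSet S q)) ∧
    ∀ D, IsMaxCliqueIn S D → j ∈ colsOf D →
      rowsOf D ⊆
        rowsOf (rowsSet S j ×ˢ (Finset.univ.filter fun q : Fin n => rowsSet S j ⊆ rowsSet S q)) := by
  set C : Finset (Fin n) := Finset.univ.filter fun q : Fin n => rowsSet S j ⊆ rowsSet S q with hC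
  have hjC : j ∈ C := by simp [hC]
  have hmemE : ∀ i q, (i, q) ∈ rowsSet S j ×ˢ C ↔
      i ∈ rowsSet S j ∧ rowsSet S j ⊆ rowsSet S q := by
    intro i q; simp [hC, Finset.mem_product]
  have hEsub : (rowsSet S j ×ˢ C) ⊆ S := by
    rintro ⟨i, q⟩ hp
    rw [hmemE] at hp
    exact mem_rowsSet.1 (hp.2 hp.1)
  obtain ⟨i0, hi0⟩ := hj
  have hclique : IsCliqueIn S (rowsSet S j ×ˢ C) := by
    refine ⟨⟨(i0, j), ?_⟩, hEsub, rowsSet S j, C, rfl⟩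
    exact Finset.mem_product.2 ⟨hi0, hjC⟩
  constructor
  · refine ⟨hclique, ?_⟩
    rintro E ⟨hEne, hES, R', C', rfl⟩ hsub
    have hjC' : j ∈ C' := by
      have := hsub (show (i0, j) ∈ rowsSet S j ×ˢ C from Finset.mem_product.2 ⟨hi0, hjC⟩)
      exact (Finset.mem_product.1 this).2
    apply Finset.Subset.antisymm hsub
    rintro ⟨i, q⟩ hp
    obtain ⟨hiR, hqC⟩ := Finset.mem_product.1 hp
    rw [hmemE]
    constructor
    · exact mem_rowsSet.2 (hES (Finset.mem_product.2 ⟨hiR, hjC'⟩))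
    · intro i' hi'
      have hi'R : i' ∈ R' := by
        have := hsub (show (i', j) ∈ rowsSet S j ×ˢ C from Finset.mem_product.2 ⟨hi', hjC⟩)
        exact (Finset.mem_product.1 this).1
      exact mem_rowsSet.2 (hES (Finset.mem_product.2 ⟨hi'R, hqC⟩))
  · rintro D ⟨⟨hDne, hDS, R', C', rfl⟩, _⟩ hjD
    have hjC' : j ∈ C' := by
      simp only [colsOf, Finset.mem_image] at hjD
      obtain ⟨⟨a, b⟩, hab, rfl⟩ := hjD
      exact (Finset.mem_product.1 hab).2
    intro i hi
    simp only [rowsOf, Finset.mem_image] at hi ⊢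
    obtain ⟨⟨a, b⟩, hab, rfl⟩ := hi
    have haR : a ∈ R' := (Finset.mem_product.1 hab).1
    refine ⟨(a, j), show (a, j) ∈ rowsSet S j ×ˢ C from Finset.mem_product.2 ⟨?_, hjC⟩, rfl⟩
    exact mem_rowsSet.2 (hDS (Finset.mem_product.2 ⟨haR, hjC'⟩))
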